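/- arXiv:1803.05932 — 2 statements merged into one kernel-verified Lean document; each statement's English description precedes it below -/
import Mathlib

section
/- Let f : ℝ^m → ℝ^m satisfy the dissipativity condition ⟨x, f(x)⟩ ≤ -α̃‖x‖² + β̃ with α̃, β̃ > 0, and the linear growth bound ‖f(x)‖² ≤ 2(‖f(0)‖² + K²‖x‖²). Then for any α ∈ (0, α̃) there exist β > β̃ and h₀ > 0 such that for all 0 < h < h₀ and all x ∈ ℝ^m: ‖x + f(x)h‖² ≤ (1 - 2αh)‖x‖² + 2βh. -/
/-!
Expanding the square, `‖x + h f(x)‖² = ‖x‖² + 2h⟨x, f(x)⟩ + h²‖f(x)‖²`. Dissipativity bounds the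
middle term by `-2α̃h‖x‖² + 2β̃h`, and linear growth bounds the last one by
`2h²(‖f(0)‖² + K²‖x‖²)`. Once `hK² ≤ α̃ - α` and `h ≤ 1`, the `h²` terms are absorbed into the
margin `α̃ - α` of the contraction rate and into a slightly larger constant `β`.
-/

open Real

section EulerStep

variable {E : Type*} [NormedAddCommGroup E] [InnerProductSpace ℝ E]

theorem norm_add_smul_sq (x y : E) (h : ℝ) :
    ‖x + h • y‖ ^ 2 = ‖x‖ ^ 2 + 2 * h * inner ℝ x y + h ^ 2 * ‖y‖ ^ 2 := by
  rw [norm_add_sq_real, real_inner_smul_right, norm_smul, mul_pow, Real.norm_eq_abs, sq_abs]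
  ring

theorem norm_euler_step_sq_le {f : E → E} {K alpha' beta' h : ℝ}
    (hdiss : ∀ x, inner ℝ x (f x) ≤ -alpha' * ‖x‖ ^ 2 + beta')
    (hgrowth : ∀ x, ‖f x‖ ^ 2 ≤ 2 * (‖f 0‖ ^ 2 + K ^ 2 * ‖x‖ ^ 2)) (hh : 0 ≤ h) (x : E) :
    ‖x + h • f x‖ ^ 2 ≤
      (1 - 2 * alpha' * h + 2 * K ^ 2 * h ^ 2) * ‖x‖ ^ 2 + 2 * (beta' + h * ‖f 0‖ ^ 2) * h := by
  have hinner := mul_le_mul_of_nonneg_left (hdiss x) (by positivity : 0 ≤ 2 * h)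
  have hsq := mul_le_mul_of_nonneg_left (hgrowth x) (sq_nonneg h)
  rw [norm_add_smul_sq]
  linarith

theorem norm_euler_step_sq_le_of_small_step {f : E → E} {K alpha alpha' beta' h : ℝ}
    (hdiss : ∀ x, inner ℝ x (f x) ≤ -alpha' * ‖x‖ ^ 2 + beta')
    (hgrowth : ∀ x, ‖f x‖ ^ 2 ≤ 2 * (‖f 0‖ ^ 2 + K ^ 2 * ‖x‖ ^ 2)) (hh : 0 ≤ h)
    (hhK : h * K ^ 2 ≤ alpha' - alpha) (hh1 : h ≤ 1) (x : E) :
    ‖x + h • f x‖ ^ 2 ≤ (1 - 2 * alpha * h) * ‖x‖ ^ 2 + 2 * (beta' + ‖f 0‖ ^ 2) * h := by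
  have hrate : 1 - 2 * alpha' * h + 2 * K ^ 2 * h ^ 2 ≤ 1 - 2 * alpha * h := by
    nlinarith [mul_le_mul_of_nonneg_left hhK hh]
  have hconst : beta' + h * ‖f 0‖ ^ 2 ≤ beta' + ‖f 0‖ ^ 2 := by
    nlinarith [sq_nonneg ‖f 0‖]
  calc ‖x + h • f x‖ ^ 2
      ≤ (1 - 2 * alpha' * h + 2 * K ^ 2 * h ^ 2) * ‖x‖ ^ 2 + 2 * (beta' + h * ‖f 0‖ ^ 2) * h :=
        norm_euler_step_sq_le hdiss hgrowth hh x
    _ ≤ (1 - 2 * alpha * h) * ‖x‖ ^ 2 + 2 * (beta' + ‖f 0‖ ^ 2) * h := by gcongr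

end EulerStep

theorem euler_one_step_dissipativity_general (m : ℕ) (K alpha' beta' : ℝ)
    (hK : 0 < K)
    (f : EuclideanSpace ℝ (Fin m) → EuclideanSpace ℝ (Fin m))
    (hdiss : ∀ x, (inner ℝ x (f x) : ℝ) ≤ -alpha' * ‖x‖ ^ 2 + beta')
    (hgrowth : ∀ x, ‖f x‖ ^ 2 ≤ 2 * (‖f 0‖ ^ 2 + K ^ 2 * ‖x‖ ^ 2))
    (alpha : ℝ) (ha' : alpha < alpha') :
    ∃ beta > beta', ∃ h₀ > 0, ∀ h : ℝ, 0 < h → h < h₀ →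
      ∀ x, ‖x + h • f x‖ ^ 2 ≤ (1 - 2 * alpha * h) * ‖x‖ ^ 2 + 2 * beta * h := by
  have hK2 : 0 < K ^ 2 := by positivity
  refine ⟨beta' + ‖f 0‖ ^ 2 + 1, by linarith [sq_nonneg ‖f 0‖], min ((alpha' - alpha) / K ^ 2) 1,
    lt_min (div_pos (sub_pos.mpr ha') hK2) one_pos, fun h hh hh₀ x => ?_⟩
  have hhK : h * K ^ 2 ≤ alpha' - alpha :=
    ((lt_div_iff₀ hK2).mp (hh₀.trans_le (min_le_left _ _))).le
  have hh1 : h ≤ 1 := (hh₀.trans_le (min_le_right _ _)).le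
  calc ‖x + h • f x‖ ^ 2 ≤ (1 - 2 * alpha * h) * ‖x‖ ^ 2 + 2 * (beta' + ‖f 0‖ ^ 2) * h :=
        norm_euler_step_sq_le_of_small_step hdiss hgrowth hh.le hhK hh1 x
    _ ≤ (1 - 2 * alpha * h) * ‖x‖ ^ 2 + 2 * (beta' + ‖f 0‖ ^ 2 + 1) * h := by nlinarith

theorem euler_one_step_dissipativity (m : ℕ) (K alpha' beta' : ℝ)
    (hK : 0 < K) (halpha' : 0 < alpha') (hbeta' : 0 < beta')
    (f : EuclideanSpace ℝ (Fin m) → EuclideanSpace ℝ (Fin m))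
    (hdiss : ∀ x, (inner ℝ x (f x) : ℝ) ≤ -alpha' * ‖x‖ ^ 2 + beta')
    (hgrowth : ∀ x, ‖f x‖ ^ 2 ≤ 2 * (‖f 0‖ ^ 2 + K ^ 2 * ‖x‖ ^ 2))
    (alpha : ℝ) (ha : 0 < alpha) (ha' : alpha < alpha') :
    ∃ beta > beta', ∃ h₀ > 0, ∀ h : ℝ, 0 < h → h < h₀ →
      ∀ x, ‖x + h • f x‖ ^ 2 ≤ (1 - 2 * alpha * h) * ‖x‖ ^ 2 + 2 * beta * h :=
  euler_one_step_dissipativity_general m K alpha' beta' hK f hdiss hgrowth alpha ha'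
end

section
/- Let f satisfy the one-sided Lipschitz condition ⟨x - y, f(x) - f(y)⟩ ≤ λ‖x - y‖² and the global Lipschitz condition ‖f(x) - f(y)‖ ≤ K‖x - y‖. For S > λ/2, consider the one-step odd-time update e ↦ (1 - 2Sh)e + (f(x) - f(y))h where e = x - y. Then ‖(1-2Sh)(x-y) + (f(x)-f(y))h‖² ≤ ((1-2Sh)² + 2λh(1-2Sh) + K²h²)‖x - y‖², and there exists h₀ > 0 such that for all 0 < h < h₀ this is at most 2‖x - y‖². -/
open Real Filter Topology

theorem norm_smul_add_smul_sq_le {E : Type*} [NormedAddCommGroup E] [InnerProductSpace ℝ E]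
    {e d : E} {a b lam K : ℝ} (hab : 0 ≤ a * b) (hinner : inner ℝ e d ≤ lam * ‖e‖ ^ 2)
    (hnorm : ‖d‖ ≤ K * ‖e‖) :
    ‖a • e + b • d‖ ^ 2 ≤ (a ^ 2 + 2 * lam * b * a + K ^ 2 * b ^ 2) * ‖e‖ ^ 2 := by
  have hexpand : ‖a • e + b • d‖ ^ 2 =
      a ^ 2 * ‖e‖ ^ 2 + 2 * (a * b) * inner ℝ e d + b ^ 2 * ‖d‖ ^ 2 := by
    rw [norm_add_sq_real, norm_smul, norm_smul, real_inner_smul_left, real_inner_smul_right,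
      mul_pow, mul_pow, Real.norm_eq_abs, Real.norm_eq_abs, sq_abs, sq_abs]
    ring
  have hnorm_sq : ‖d‖ ^ 2 ≤ K ^ 2 * ‖e‖ ^ 2 := by
    rw [← mul_pow]
    exact pow_le_pow_left₀ (norm_nonneg d) hnorm 2
  rw [hexpand]
  nlinarith [mul_le_mul_of_nonneg_left hinner hab,
    mul_le_mul_of_nonneg_left hnorm_sq (sq_nonneg b)]

theorem odd_step_difference_bound_general (m : ℕ) (lam K S : ℝ)
    (f : EuclideanSpace ℝ (Fin m) → EuclideanSpace ℝ (Fin m))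
    (hosl : ∀ x y, (inner ℝ (x - y) (f x - f y) : ℝ) ≤ lam * ‖x - y‖ ^ 2)
    (hlip : ∀ x y, ‖f x - f y‖ ≤ K * ‖x - y‖) :
    (∀ h : ℝ, 0 < h → 2 * S * h < 1 → ∀ x y,
      ‖(1 - 2 * S * h) • (x - y) + h • (f x - f y)‖ ^ 2 ≤
        ((1 - 2 * S * h) ^ 2 + 2 * lam * h * (1 - 2 * S * h) + K ^ 2 * h ^ 2)
          * ‖x - y‖ ^ 2)
    ∧ ∃ h₀ > 0, ∀ h : ℝ, 0 < h → h < h₀ → 2 * S * h < 1 → ∀ x y,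
      ‖(1 - 2 * S * h) • (x - y) + h • (f x - f y)‖ ^ 2 ≤ 2 * ‖x - y‖ ^ 2 := by
  have step : ∀ h : ℝ, 0 < h → 2 * S * h < 1 → ∀ x y,
      ‖(1 - 2 * S * h) • (x - y) + h • (f x - f y)‖ ^ 2 ≤
        ((1 - 2 * S * h) ^ 2 + 2 * lam * h * (1 - 2 * S * h) + K ^ 2 * h ^ 2)
          * ‖x - y‖ ^ 2 := fun h hh hSh x y =>
    norm_smul_add_smul_sq_le (mul_nonneg (by linarith) hh.le) (hosl x y) (hlip x y)
  refine ⟨step, ?_⟩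
  set p : ℝ → ℝ := fun h => (1 - 2 * S * h) ^ 2 + 2 * lam * h * (1 - 2 * S * h) + K ^ 2 * h ^ 2
  -- `p 0 = 1`, so by continuity `p < 2` near `0`.
  have hp_near : ∀ᶠ h in 𝓝 0, p h < 2 :=
    ((by fun_prop : Continuous p).tendsto 0).eventually_lt_const (by norm_num [p])
  obtain ⟨h₀, hh₀, hp⟩ := Metric.eventually_nhds_iff.mp hp_near
  refine ⟨h₀, hh₀, fun h hh hlt hSh x y => (step h hh hSh x y).trans ?_⟩
  have hph : p h < 2 := hp (by rwa [Real.dist_0_eq_abs, abs_of_pos hh])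
  exact mul_le_mul_of_nonneg_right hph.le (sq_nonneg _)

theorem odd_step_difference_bound (m : ℕ) (lam K S : ℝ)
    (hlam : 0 < lam) (hK : 0 < K) (hS : S > lam / 2)
    (f : EuclideanSpace ℝ (Fin m) → EuclideanSpace ℝ (Fin m))
    (hosl : ∀ x y, (inner ℝ (x - y) (f x - f y) : ℝ) ≤ lam * ‖x - y‖ ^ 2)
    (hlip : ∀ x y, ‖f x - f y‖ ≤ K * ‖x - y‖) :
    (∀ h : ℝ, 0 < h → 2 * S * h < 1 → ∀ x y,
      ‖(1 - 2 * S * h) • (x - y) + h • (f x - f y)‖ ^ 2 ≤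
        ((1 - 2 * S * h) ^ 2 + 2 * lam * h * (1 - 2 * S * h) + K ^ 2 * h ^ 2)
          * ‖x - y‖ ^ 2)
    ∧ ∃ h₀ > 0, ∀ h : ℝ, 0 < h → h < h₀ → 2 * S * h < 1 → ∀ x y,
      ‖(1 - 2 * S * h) • (x - y) + h • (f x - f y)‖ ^ 2 ≤ 2 * ‖x - y‖ ^ 2 :=
  odd_step_difference_bound_general m lam K S f hosl hlip
end
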